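/- Let x and y be admissible infinite decimals with nonnegative integer parts, and let s ≥ 0 be an integer with val(x) + val(y) ≤ 10^s. Then for every k ≥ 1 and every n > k + s one has 0 ≤ x_n·y_n − x_{k+s}·y_{k+s} < 10^{-k}, where x_j, y_j denote the j-th rational truncations. -/

import Mathlib

/-- An infinite decimal: integer part `z` and digits `d : ℕ → ℕ` (indices ≥ 1 used),
each digit between 0 and 9. -/
structure InfDec where
  z : ℤ
  d : ℕ → ℕ
  d_le : ∀ k, 1 ≤ k → d k ≤ 9

/-- The `k`-th rational truncation `x_k = z + Σ_{i=1}^k d(i)·10^{-i}`. -/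
def InfDec.trunc (x : InfDec) (k : ℕ) : ℚ :=
  (x.z : ℚ) + ∑ i ∈ Finset.Icc 1 k, (x.d i : ℚ) / 10 ^ i

/-- The real value `val(x) = z + Σ_{i=1}^∞ d(i)·10^{-i}`. -/
noncomputable def InfDec.val (x : InfDec) : ℝ :=
  (x.z : ℝ) + ∑' i : ℕ, (x.d (i + 1) : ℝ) / 10 ^ (i + 1)

/-- Admissibility: `d(k) < 9` for infinitely many `k`. -/
def InfDec.Admissible (x : InfDec) : Prop :=
  ∀ N : ℕ, ∃ k ≥ N, x.d k < 9

/-- The `m`-th truncation of a rational: `T_m(q) = ⌊10^m q⌋ / 10^m`. -/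
def Tq (m : ℕ) (q : ℚ) : ℚ := (⌊(10 : ℚ) ^ m * q⌋ : ℚ) / 10 ^ m

/-- The `m`-th truncation of a real: `T_m(r) = ⌊10^m r⌋ / 10^m`. -/
noncomputable def Tr (m : ℕ) (r : ℝ) : ℝ := (⌊(10 : ℝ) ^ m * r⌋ : ℝ) / 10 ^ m

/-- The `m`-th digit of a rational (`m ≥ 1`): `θ_m(q) = ⌊10^m q⌋ − 10·⌊10^{m−1} q⌋`. -/
def digq (m : ℕ) (q : ℚ) : ℤ := ⌊(10 : ℚ) ^ m * q⌋ - 10 * ⌊(10 : ℚ) ^ (m - 1) * q⌋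

lemma trunc_mono (x : InfDec) {m n : ℕ} (h : m ≤ n) : x.trunc m ≤ x.trunc n := by
  unfold InfDec.trunc
  gcongr

lemma trunc_nonneg (x : InfDec) (hz : 0 ≤ x.z) (n : ℕ) : 0 ≤ x.trunc n := by
  unfold InfDec.trunc
  have : (0:ℚ) ≤ (x.z : ℚ) := by exact_mod_cast hz
  have h2 : (0:ℚ) ≤ ∑ i ∈ Finset.Icc 1 n, (x.d i : ℚ) / 10 ^ i := by positivity
  linarith

lemma trunc_succ (x : InfDec) (n : ℕ) :
    x.trunc (n + 1) = x.trunc n + (x.d (n+1) : ℚ) / 10 ^ (n+1) := by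
  unfold InfDec.trunc
  rw [Finset.sum_Icc_succ_top (by omega : 1 ≤ n + 1)]
  ring

lemma trunc_sub (x : InfDec) {m n : ℕ} (h : m ≤ n) :
    x.trunc n ≤ x.trunc m + 1 / 10 ^ m - 1 / 10 ^ n := by
  induction n, h using Nat.le_induction with
  | base => simp
  | succ n hn ih =>
    rw [trunc_succ]
    have hd : (x.d (n+1) : ℚ) ≤ 9 := by exact_mod_cast x.d_le (n+1) (by omega)
    have h10 : (0:ℚ) < 10 ^ n := by positivity
    have : (x.d (n+1) : ℚ) / 10 ^ (n+1) ≤ 9 / 10 ^ (n+1) := by gcongr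
    have he : (1:ℚ) / 10 ^ n = 10 / 10 ^ (n+1) := by
      rw [pow_succ]; field_simp
    have he2 : (9:ℚ) / 10 ^ (n+1) = 1 / 10 ^ n - 1 / 10 ^ (n+1) := by
      rw [he]; ring
    linarith

lemma summable_digits (x : InfDec) :
    Summable (fun i : ℕ => (x.d (i + 1) : ℝ) / 10 ^ (i + 1)) := by
  have hsum : Summable (fun i : ℕ => (9/10 : ℝ) * (1/10) ^ i) :=
    (summable_geometric_of_lt_one (by norm_num) (by norm_num)).mul_left _
  refine Summable.of_nonneg_of_le (fun i => by positivity) (fun i => ?_) hsum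
  · have hd : (x.d (i+1) : ℝ) ≤ 9 := by exact_mod_cast x.d_le (i+1) (by omega)
    have : ((9:ℝ)/10) * (1/10)^i = 9 / 10 ^ (i+1) := by
      rw [pow_succ, one_div, inv_pow]; ring
    rw [this]
    gcongr

lemma trunc_le_val (x : InfDec) (n : ℕ) : ((x.trunc n : ℚ) : ℝ) ≤ x.val := by
  unfold InfDec.trunc InfDec.val
  push_cast
  gcongr
  rw [← Finset.Ico_add_one_right_eq_Icc, Finset.sum_Ico_eq_sum_range]
  norm_num
  have heq : ∀ i, (x.d (1 + i) : ℝ) / 10 ^ (1 + i) = (x.d (i + 1) : ℝ) / 10 ^ (i + 1) := by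
    intro i; rw [add_comm]
  simp only [heq]
  exact (summable_digits x).sum_le_tsum _ (fun i _ => by positivity)

theorem stmt10 (x y : InfDec) (hx : x.Admissible) (hy : y.Admissible)
    (hxz : 0 ≤ x.z) (hyz : 0 ≤ y.z) (s : ℕ) (hs : x.val + y.val ≤ 10 ^ s) :
    ∀ k, 1 ≤ k → ∀ n > k + s,
      0 ≤ x.trunc n * y.trunc n - x.trunc (k + s) * y.trunc (k + s) ∧
      x.trunc n * y.trunc n - x.trunc (k + s) * y.trunc (k + s) < 1 / 10 ^ k := by
  intro k hk n hn
  have hmn : k + s ≤ n := hn.le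
  have hx1 : x.trunc (k + s) ≤ x.trunc n := trunc_mono x hmn
  have hy1 : y.trunc (k + s) ≤ y.trunc n := trunc_mono y hmn
  have hx0 : 0 ≤ x.trunc (k + s) := trunc_nonneg x hxz _
  have hy0 : 0 ≤ y.trunc (k + s) := trunc_nonneg y hyz _
  refine ⟨by nlinarith [mul_le_mul hx1 hy1 hy0 (hx0.trans hx1)], ?_⟩
  have hXmX : ((x.trunc (k + s) : ℚ) : ℝ) ≤ ((x.trunc n : ℚ) : ℝ) := by exact_mod_cast hx1
  have hYmY : ((y.trunc (k + s) : ℚ) : ℝ) ≤ ((y.trunc n : ℚ) : ℝ) := by exact_mod_cast hy1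
  have hXm0 : (0:ℝ) ≤ ((x.trunc (k + s) : ℚ) : ℝ) := by exact_mod_cast hx0
  have hYm0 : (0:ℝ) ≤ ((y.trunc (k + s) : ℚ) : ℝ) := by exact_mod_cast hy0
  have hXT : ((x.trunc n : ℚ) : ℝ) ≤ ((x.trunc (k + s) : ℚ) : ℝ) + 1 / 10 ^ (k + s) - 1 / 10 ^ n := by
    have h2 := (Rat.cast_le (K := ℝ)).mpr (trunc_sub x hmn)
    push_cast at h2
    linarith
  have hYT : ((y.trunc n : ℚ) : ℝ) ≤ ((y.trunc (k + s) : ℚ) : ℝ) + 1 / 10 ^ (k + s) - 1 / 10 ^ n := by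
    have h2 := (Rat.cast_le (K := ℝ)).mpr (trunc_sub y hmn)
    push_cast at h2
    linarith
  have hXv : ((x.trunc n : ℚ) : ℝ) ≤ x.val := trunc_le_val x n
  have hYv : ((y.trunc (k + s) : ℚ) : ℝ) ≤ y.val := trunc_le_val y (k + s)
  have hT0 : (0:ℝ) ≤ 1 / 10 ^ (k + s) - 1 / 10 ^ n := by
    have hle : (10:ℝ) ^ (k + s) ≤ 10 ^ n := by gcongr; norm_num
    have h1 : (0:ℝ) < 10 ^ (k + s) := by positivity
    have h2 : (0:ℝ) < 10 ^ n := by positivity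
    rw [sub_nonneg, div_le_div_iff₀ h2 h1]
    linarith
  have h3 : (10:ℝ) ^ s * (1 / 10 ^ (k + s) - 1 / 10 ^ n) < 1 / 10 ^ k := by
    have e : (10:ℝ) ^ s * (1 / 10 ^ (k + s) - 1 / 10 ^ n) = 1 / 10 ^ k - 10 ^ s / 10 ^ n := by
      rw [pow_add]
      field_simp
    rw [e]
    have : (0:ℝ) < 10 ^ s / 10 ^ n := by positivity
    linarith
  have hsum : ((x.trunc n : ℚ) : ℝ) + ((y.trunc (k + s) : ℚ) : ℝ) ≤ 10 ^ s := by linarith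
  have hfinal : ((x.trunc n : ℚ) : ℝ) * ((y.trunc n : ℚ) : ℝ) -
      ((x.trunc (k + s) : ℚ) : ℝ) * ((y.trunc (k + s) : ℚ) : ℝ) < 1 / (10:ℝ) ^ k := by
    nlinarith [mul_nonneg (hXm0.trans hXmX) (by linarith : (0:ℝ) ≤ 1 / 10 ^ (k + s) - 1 / 10 ^ n - (((y.trunc n : ℚ) : ℝ) - ((y.trunc (k + s) : ℚ) : ℝ))),
      mul_nonneg hYm0 (by linarith : (0:ℝ) ≤ 1 / 10 ^ (k + s) - 1 / 10 ^ n - (((x.trunc n : ℚ) : ℝ) - ((x.trunc (k + s) : ℚ) : ℝ))),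
      mul_le_mul_of_nonneg_right hsum hT0]
  refine (Rat.cast_lt (K := ℝ)).mp ?_
  push_cast
  linarith
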